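/- arXiv:1707.07992 — 3 statements merged into one kernel-verified Lean document; each statement's English description precedes it below -/
import Mathlib

section
/- A non-degenerate code algebra A_C(Λ) is simple (has no non-trivial proper two-sided ideals) unless C = {𝟎, 𝟏, α, α^c} for some α. -/
abbrev Word (n : ℕ) := Fin n → ZMod 2

def wsupp {n : ℕ} (α : Word n) : Finset (Fin n) :=
  Finset.univ.filter fun i => α i = 1

def dotW {n : ℕ} (u v : Word n) : ZMod 2 := ∑ i, u i * v i

def IsStar {n : ℕ} (C : Submodule (ZMod 2) (Word n)) (α : Word n) : Prop :=
  α ∈ C ∧ α ≠ 0 ∧ α ≠ 1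

structure CodeAlgebra (F : Type*) [Field F] {n : ℕ} (C : Submodule (ZMod 2) (Word n))
    (a : Fin n → Word n → F) (b : Word n → Word n → F) (c : Fin n → Word n → F)
    (A : Type*) [AddCommGroup A] [Module F A] where
  mul : A →ₗ[F] A →ₗ[F] A
  t : Fin n → A
  e : Word n → A
  bas : Module.Basis (Fin n ⊕ {α : Word n // IsStar C α}) F A
  bas_t : ∀ i, bas (Sum.inl i) = t i
  bas_e : ∀ α, bas (Sum.inr α) = e α.1
  mul_comm : ∀ x y : A, mul x y = mul y x
  t_mul_t : ∀ i j, mul (t i) (t j) = if i = j then t i else 0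
  t_mul_e : ∀ (i : Fin n) (α : Word n), IsStar C α →
    mul (t i) (e α) = if α i = 1 then a i α • e α else 0
  e_mul_e : ∀ (α β : Word n), IsStar C α → IsStar C β → α ≠ β → α + β ≠ 1 →
    mul (e α) (e β) = b α β • e (α + β)
  e_mul_self : ∀ (α : Word n), IsStar C α →
    mul (e α) (e α) = ∑ i ∈ wsupp α, c i α • t i
  e_mul_compl : ∀ (α β : Word n), IsStar C α → IsStar C β → α + β = 1 →
    mul (e α) (e β) = 0

def Nondeg {F : Type*} [Field F] {n : ℕ} (C : Submodule (ZMod 2) (Word n))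
    (a : Fin n → Word n → F) (b : Word n → Word n → F) (c : Fin n → Word n → F) : Prop :=
  (∀ i : Fin n, ∃ α ∈ C, α i = 1) ∧ (∃ α, IsStar C α) ∧
  (∀ i α, IsStar C α → α i = 1 → a i α ≠ 0) ∧
  (∀ α β, IsStar C α → IsStar C β → α ≠ β → α + β ≠ 1 → b α β ≠ 0) ∧
  (∀ i α, IsStar C α → α i = 1 → c i α ≠ 0)

/-!
Multiplication by the idempotent `t i` acts diagonally on the basis `{t j} ∪ {e α}`, and the
weight (vector of eigenvalues) of a basis vector determines it, except that `t j` and `e α` share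
their weight when `supp α = {j}`. Hence a nonzero element of minimal support in an ideal `I` is a
joint eigenvector: a multiple of a basis vector, or `λ t j + μ e α`. The latter is impossible,
since multiplying it by `e β` for a non-constant `β ≠ α, α^c` gives an element of `I` supported
on two basis vectors of different weights. So `I` contains some `t j`. Finally, `t i ∈ I` gives
`e α ∈ I` whenever `α i = 1`, and then `e α * e α` gives every `t k` with `α k = 1`; so if some
`t k ∉ I`, every non-constant codeword lies inside or outside `{i | t i ∈ I}`, any two on opposite
sides are complementary, and `C = {0, 1, α, α^c}`.
-/

open Finset
namespace Module.Basis

variable {F M ι : Type*} [Field F] [AddCommGroup M] [Module F M] (bas : Basis ι F M)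

theorem repr_apply_eq_mul_of_apply_eq_smul {f : M →ₗ[F] M} {d : ι → F}
    (hd : ∀ i, f (bas i) = d i • bas i) (x : M) (i : ι) :
    bas.repr (f x) i = d i * bas.repr x i := by
  have : Finsupp.lapply i ∘ₗ bas.repr.toLinearMap ∘ₗ f =
      d i • (Finsupp.lapply i ∘ₗ bas.repr.toLinearMap) :=
    bas.ext fun j => by
      by_cases hij : i = j
      · subst hij; simp [hd]
      · simp [hd, hij]
  exact LinearMap.congr_fun this x

theorem exists_ne_zero_card_support_le {p : Submodule F M} (hp : p ≠ ⊥) :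
    ∃ x ∈ p, x ≠ 0 ∧ ∀ y ∈ p, y ≠ 0 → #(bas.repr x).support ≤ #(bas.repr y).support := by
  obtain ⟨y, hy, hy0⟩ := (Submodule.ne_bot_iff p).mp hp
  let S : Set M := {x | x ∈ p ∧ x ≠ 0}
  have hyS : y ∈ S := ⟨hy, hy0⟩
  obtain ⟨hxp, hx0⟩ := Function.argminOn_mem (fun x => #(bas.repr x).support) S ⟨y, hyS⟩
  exact ⟨_, hxp, hx0, fun z hz hz0 =>
    Function.argminOn_le (fun x => #(bas.repr x).support) S (a := z) ⟨hz, hz0⟩⟩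

/-- `f x - d j • x` lies in `p` and has smaller support than `x`, so it vanishes. -/
theorem apply_eq_of_mem_support_of_card_support_le {p : Submodule F M} {f : M →ₗ[F] M}
    (hf : ∀ x ∈ p, f x ∈ p) {d : ι → F} (hd : ∀ i, f (bas i) = d i • bas i) {x : M} (hx : x ∈ p)
    (hmin : ∀ y ∈ p, y ≠ 0 → #(bas.repr x).support ≤ #(bas.repr y).support)
    {i j : ι} (hi : i ∈ (bas.repr x).support) (hj : j ∈ (bas.repr x).support) : d i = d j := by
  classical
  set y := f x - d j • x
  have hy : ∀ k, bas.repr y k = (d k - d j) * bas.repr x k := fun k => by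
    simp [y, repr_apply_eq_mul_of_apply_eq_smul bas hd, sub_mul]
  have hy0 : y = 0 := by
    by_contra hy0
    have hsub : (bas.repr y).support ⊆ (bas.repr x).support.erase j := fun k hk => by
      rw [Finsupp.mem_support_iff, hy] at hk
      exact mem_erase.mpr ⟨fun h => hk (by rw [h, sub_self, zero_mul]),
        Finsupp.mem_support_iff.mpr (right_ne_zero_of_mul hk)⟩
    have := (card_le_card hsub).trans_lt (card_erase_lt_of_mem hj)
    exact this.not_ge (hmin y (sub_mem (hf x hx) (p.smul_mem _ hx)) hy0)
  have := hy i
  rw [hy0, map_zero, Finsupp.coe_zero, Pi.zero_apply, eq_comm] at this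
  exact sub_eq_zero.mp ((mul_eq_zero.mp this).resolve_right (Finsupp.mem_support_iff.mp hi))

theorem apply_eq_of_smul_add_smul_mem {p : Submodule F M} {f : M →ₗ[F] M}
    (hf : ∀ x ∈ p, f x ∈ p) {d : ι → F} (hd : ∀ i, f (bas i) = d i • bas i)
    (h2 : ∀ y ∈ p, y ≠ 0 → 2 ≤ #(bas.repr y).support) {i k : ι} (hik : i ≠ k) {r r' : F}
    (hr' : r' ≠ 0) (hz : r • bas i + r' • bas k ∈ p) : d i = d k := by
  classical
  set z := r • bas i + r' • bas k
  have hrepr : bas.repr z = Finsupp.single i r + Finsupp.single k r' := by simp [z]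
  have hz0 : z ≠ 0 := fun h => hr' (by simpa [hrepr, hik] using congrArg (bas.repr · k) h)
  have hsub : (bas.repr z).support ⊆ {i, k} := hrepr ▸ (Finsupp.support_add.trans
    (union_subset_union Finsupp.support_single_subset Finsupp.support_single_subset))
  have hr : r ≠ 0 := by
    rintro rfl
    have : (bas.repr z).support ⊆ {k} := by simpa [hrepr] using Finsupp.support_single_subset
    exact absurd ((h2 z hz hz0).trans (card_le_card this)) (by simp)
  refine apply_eq_of_mem_support_of_card_support_le bas hf hd hz (fun y hy hy0 => ?_) ?_ ?_
  · exact (card_le_card hsub).trans ((card_le_two).trans (h2 y hy hy0))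
  · simp [hrepr, hik, hr]
  · simp [hrepr, hik.symm, hr']

theorem eq_sum_of_support_subset {x : M} {s : Finset ι} (h : (bas.repr x).support ⊆ s) :
    x = ∑ i ∈ s, bas.repr x i • bas i := by
  conv_lhs => rw [← bas.linearCombination_repr x]
  rw [Finsupp.linearCombination_apply, Finsupp.sum_of_support_subset _ h]
  simp

end Module.Basis

theorem ZMod.eq_zero_of_ne_one_two {x : ZMod 2} (h : x ≠ 1) : x = 0 := by
  revert x; decide

section Code

variable {n : ℕ} {C : Submodule (ZMod 2) (Word n)}

theorem word_eq_one_add_of_add_eq_one {α β : Word n} (h : α + β = 1) : α = 1 + β := by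
  rw [eq_sub_of_add_eq h, ZModModule.sub_eq_add]

theorem word_exists_apply_eq_one {α : Word n} (h : α ≠ 0) : ∃ i, α i = 1 := by
  by_contra! hα
  exact h (funext fun i => ZMod.eq_zero_of_ne_one_two (hα i))

theorem IsStar.one_add (h1 : (1 : Word n) ∈ C) {α : Word n} (hα : IsStar C α) :
    IsStar C (1 + α) := by
  refine ⟨C.add_mem h1 hα.1, fun h => hα.2.2 ?_, fun h => hα.2.1 (add_eq_left.mp h)⟩
  rw [← neg_eq_of_add_eq_zero_right h, ZModModule.neg_eq_self]

theorem IsStar.add {α β : Word n} (hα : IsStar C α) (hβ : IsStar C β) (hne : α ≠ β)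
    (h1 : α + β ≠ 1) : IsStar C (α + β) :=
  ⟨C.add_mem hα.1 hβ.1,
    fun h => hne (by rw [eq_sub_of_add_eq h, ZModModule.sub_eq_add, zero_add]), h1⟩

theorem exists_isStar_apply_eq_one (hsupp : ∀ i : Fin n, ∃ α ∈ C, α i = 1)
    (hstar : ∃ α, IsStar C α) (i : Fin n) : ∃ α, IsStar C α ∧ α i = 1 := by
  obtain ⟨γ, hγ, hγi⟩ := hsupp i
  by_cases hγ1 : γ = 1
  · obtain ⟨β, hβ⟩ := hstar
    by_cases hβi : β i = 1
    · exact ⟨β, hβ, hβi⟩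
    · refine ⟨1 + β, hβ.one_add (hγ1 ▸ hγ), ?_⟩
      rw [Pi.add_apply, ZMod.eq_zero_of_ne_one_two hβi, Pi.one_apply, add_zero]
  · exact ⟨γ, ⟨hγ, fun h => by simp [h] at hγi, hγ1⟩, hγi⟩

theorem coe_eq_of_forall_isStar {χ : Word n} (h1 : (1 : Word n) ∈ C) (hχ : χ ∈ C)
    (h : ∀ β, IsStar C β → β = χ ∨ β = 1 + χ) : (C : Set (Word n)) = {0, 1, χ, 1 + χ} := by
  ext γ
  constructor
  · intro hγ
    by_cases h0 : γ = 0
    · exact .inl h0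
    by_cases h1 : γ = 1
    · exact .inr (.inl h1)
    exact .inr (.inr (h γ ⟨hγ, h0, h1⟩))
  · rintro (rfl | rfl | rfl | rfl)
    exacts [C.zero_mem, h1, hχ, C.add_mem h1 hχ]

theorem exists_isStar_ne_add_ne_one (hcover : ∀ i, ∃ α, IsStar C α ∧ α i = 1)
    (hC : ¬ ∃ α : Word n, (C : Set (Word n)) = {0, 1, α, 1 + α}) {χ : Word n}
    (hχ : IsStar C χ) : ∃ β, IsStar C β ∧ β ≠ χ ∧ β + χ ≠ 1 := by
  by_contra! h
  have hall : ∀ β, IsStar C β → β = χ ∨ β = 1 + χ := fun β hβ =>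
    or_iff_not_imp_left.mpr fun hne => word_eq_one_add_of_add_eq_one (h β hβ hne)
  by_cases h1 : (1 : Word n) ∈ C
  · exact hC ⟨χ, coe_eq_of_forall_isStar h1 hχ.1 hall⟩
  · refine hχ.2.2 (funext fun i => ?_)
    obtain ⟨β, hβ, hβi⟩ := hcover i
    rcases hall β hβ with rfl | rfl
    · exact hβi
    · exact absurd (by simpa [add_assoc, ZModModule.add_self] using C.add_mem hβ.1 hχ.1) h1

/-- Two non-constant codewords on opposite sides of `J` add up to `1`, since otherwise their sum
would be a non-constant codeword meeting both sides. -/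
theorem exists_coe_eq_of_saturated (hcover : ∀ i, ∃ α, IsStar C α ∧ α i = 1) {J : Set (Fin n)}
    (hJ : ∀ α, IsStar C α → ∀ i k, α i = 1 → α k = 1 → i ∈ J → k ∈ J)
    {j k : Fin n} (hj : j ∈ J) (hk : k ∉ J) :
    ∃ χ : Word n, (C : Set (Word n)) = {0, 1, χ, 1 + χ} := by
  have hcross : ∀ β γ, IsStar C β → IsStar C γ → (∃ i, β i = 1 ∧ i ∈ J) →
      (∃ k, γ k = 1 ∧ k ∉ J) → β + γ = 1 := by
    rintro β γ hβ hγ ⟨i, hβi, hi⟩ ⟨k, hγk, hk⟩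
    by_contra hβγ
    have hγi : γ i = 0 := ZMod.eq_zero_of_ne_one_two fun hγi => hk (hJ γ hγ i k hγi hγk hi)
    have hβk : β k = 0 := ZMod.eq_zero_of_ne_one_two fun hβk => hk (hJ β hβ i k hβi hβk hi)
    have hδ := hβ.add hγ (fun h => by simp [h, hγi] at hβi) hβγ
    refine hk (hJ _ hδ i k ?_ ?_ hi)
    · simp [hβi, hγi]
    · simp [hβk, hγk]
  obtain ⟨α₁, hα₁, hα₁j⟩ := hcover j
  obtain ⟨α₂, hα₂, hα₂k⟩ := hcover k
  have h12 : α₁ + α₂ = 1 := hcross α₁ α₂ hα₁ hα₂ ⟨j, hα₁j, hj⟩ ⟨k, hα₂k, hk⟩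
  refine ⟨α₁, coe_eq_of_forall_isStar (h12 ▸ C.add_mem hα₁.1 hα₂.1) hα₁.1 fun β hβ => ?_⟩
  by_cases hβJ : ∃ i, β i = 1 ∧ i ∈ J
  · left
    rw [word_eq_one_add_of_add_eq_one (hcross β α₂ hβ hα₂ hβJ ⟨k, hα₂k, hk⟩),
      word_eq_one_add_of_add_eq_one h12]
  · right
    obtain ⟨i, hβi⟩ := word_exists_apply_eq_one hβ.2.1
    have := hcross α₁ β hα₁ hβ ⟨j, hα₁j, hj⟩ ⟨i, hβi, fun hi => hβJ ⟨i, hβi, hi⟩⟩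
    exact word_eq_one_add_of_add_eq_one ((add_comm _ _).trans this)

end Code

namespace CodeAlgebra

def weight {F : Type*} [Field F] {n : ℕ} (C : Submodule (ZMod 2) (Word n))
    (a : Fin n → Word n → F) : Fin n ⊕ {α : Word n // IsStar C α} → Fin n → F
  | .inl j, i => if i = j then 1 else 0
  | .inr α, i => if α.1 i = 1 then a i α.1 else 0

variable {F : Type*} [Field F] {n : ℕ} {C : Submodule (ZMod 2) (Word n)}
  {a : Fin n → Word n → F} {b : Word n → Word n → F} {c : Fin n → Word n → F}
  {A : Type*} [AddCommGroup A] [Module F A] (CA : CodeAlgebra F C a b c A)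

theorem t_mul_basis (i : Fin n) (s : Fin n ⊕ {α : Word n // IsStar C α}) :
    CA.mul (CA.t i) (CA.bas s) = weight C a s i • CA.bas s := by
  rcases s with j | α
  · rw [CA.bas_t, CA.t_mul_t]
    by_cases h : i = j <;> simp [weight, h]
  · rw [CA.bas_e, CA.t_mul_e i α.1 α.2]
    by_cases h : α.1 i = 1 <;> simp [weight, h]

theorem weight_inl_injective {j k : Fin n}
    (h : weight C a (.inl j) = weight C a (.inl k)) : j = k := by
  simpa [weight] using congrFun h j

theorem weight_inr_injective (ha : ∀ i α, IsStar C α → α i = 1 → a i α ≠ 0)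
    {α β : {α : Word n // IsStar C α}}
    (h : weight C a (.inr α) = weight C a (.inr β)) :
    α = β := by
  refine Subtype.ext (funext fun i => ?_)
  have hi := congrFun h i
  simp only [weight] at hi
  by_cases hα : α.1 i = 1 <;> by_cases hβ : β.1 i = 1
  · rw [hα, hβ]
  · exact absurd (by simpa [hα, hβ] using hi) (ha i α.1 α.2 hα)
  · exact absurd (by simpa [hα, hβ] using hi.symm) (ha i β.1 β.2 hβ)
  · rw [ZMod.eq_zero_of_ne_one_two hα, ZMod.eq_zero_of_ne_one_two hβ]

variable {CA} {I : Submodule F A}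

theorem weight_eq_of_mem_support (hI : ∀ x, ∀ y ∈ I, CA.mul x y ∈ I) {x : A} (hx : x ∈ I)
    (hmin : ∀ y ∈ I, y ≠ 0 → #(CA.bas.repr x).support ≤ #(CA.bas.repr y).support)
    {s s' : Fin n ⊕ {α : Word n // IsStar C α}} (hs : s ∈ (CA.bas.repr x).support)
    (hs' : s' ∈ (CA.bas.repr x).support) : weight C a s = weight C a s' :=
  funext fun i => CA.bas.apply_eq_of_mem_support_of_card_support_le (fun y hy => hI _ y hy)
    (CA.t_mul_basis i) hx hmin hs hs'

theorem e_mem_of_t_mem (ha : ∀ i α, IsStar C α → α i = 1 → a i α ≠ 0)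
    (hI : ∀ x, ∀ y ∈ I, CA.mul x y ∈ I) {α : Word n} (hα : IsStar C α) {i : Fin n}
    (hi : α i = 1) (ht : CA.t i ∈ I) : CA.e α ∈ I := by
  have := hI (CA.e α) _ ht
  rwa [CA.mul_comm, CA.t_mul_e i α hα, if_pos hi, Submodule.smul_mem_iff _ (ha i α hα hi)] at this

theorem t_mem_of_e_mem (hc : ∀ i α, IsStar C α → α i = 1 → c i α ≠ 0)
    (hI : ∀ x, ∀ y ∈ I, CA.mul x y ∈ I) {α : Word n} (hα : IsStar C α) (he : CA.e α ∈ I)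
    {k : Fin n} (hk : α k = 1) : CA.t k ∈ I := by
  have := hI (CA.t k) _ (hI (CA.e α) _ he)
  have hsum : CA.mul (CA.t k) (∑ i ∈ wsupp α, c i α • CA.t i) = c k α • CA.t k := by
    simp [map_sum, CA.t_mul_t, wsupp, hk]
  rwa [CA.e_mul_self α hα, hsum, Submodule.smul_mem_iff _ (hc k α hα hk)] at this

theorem exists_t_mem_of_basis_mem (hc : ∀ i α, IsStar C α → α i = 1 → c i α ≠ 0)
    (hI : ∀ x, ∀ y ∈ I, CA.mul x y ∈ I) {s : Fin n ⊕ {α : Word n // IsStar C α}}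
    (hs : CA.bas s ∈ I) : ∃ j, CA.t j ∈ I := by
  rcases s with j | α
  · exact ⟨j, CA.bas_t j ▸ hs⟩
  · obtain ⟨k, hk⟩ := word_exists_apply_eq_one α.2.2.1
    exact ⟨k, t_mem_of_e_mem hc hI α.2 (CA.bas_e α ▸ hs) hk⟩

theorem eq_top_of_forall_t_mem (ha : ∀ i α, IsStar C α → α i = 1 → a i α ≠ 0)
    (hI : ∀ x, ∀ y ∈ I, CA.mul x y ∈ I) (ht : ∀ i, CA.t i ∈ I) : I = ⊤ := by
  refine eq_top_iff.mpr (CA.bas.span_eq ▸ Submodule.span_le.mpr ?_)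
  rintro _ ⟨j | α, rfl⟩
  · exact CA.bas_t j ▸ ht j
  · obtain ⟨i, hi⟩ := word_exists_apply_eq_one α.2.2.1
    exact CA.bas_e α ▸ e_mem_of_t_mem ha hI α.2 hi (ht i)

theorem eq_top_of_t_mem (ha : ∀ i α, IsStar C α → α i = 1 → a i α ≠ 0)
    (hc : ∀ i α, IsStar C α → α i = 1 → c i α ≠ 0)
    (hcover : ∀ i, ∃ α, IsStar C α ∧ α i = 1)
    (hC : ¬ ∃ α : Word n, (C : Set (Word n)) = {0, 1, α, 1 + α})
    (hI : ∀ x, ∀ y ∈ I, CA.mul x y ∈ I) {j : Fin n} (hj : CA.t j ∈ I) : I = ⊤ := by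
  by_contra hne
  obtain ⟨k, hk⟩ : ∃ k, CA.t k ∉ I := by
    by_contra! h
    exact hne (eq_top_of_forall_t_mem ha hI h)
  refine hC (exists_coe_eq_of_saturated hcover (J := {i | CA.t i ∈ I}) ?_ hj hk)
  exact fun α hα i k hi hk hti => t_mem_of_e_mem hc hI hα (e_mem_of_t_mem ha hI hα hi hti) hk

theorem false_of_inl_mem_support_of_inr_mem_support
    (ha : ∀ i α, IsStar C α → α i = 1 → a i α ≠ 0)
    (hb : ∀ α β, IsStar C α → IsStar C β → α ≠ β → α + β ≠ 1 → b α β ≠ 0)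
    (hcover : ∀ i, ∃ α, IsStar C α ∧ α i = 1)
    (hC : ¬ ∃ α : Word n, (C : Set (Word n)) = {0, 1, α, 1 + α})
    (hI : ∀ x, ∀ y ∈ I, CA.mul x y ∈ I) {x : A} (hx : x ∈ I)
    (hmin : ∀ y ∈ I, y ≠ 0 → #(CA.bas.repr x).support ≤ #(CA.bas.repr y).support)
    {j : Fin n} {α : {α : Word n // IsStar C α}} (hj : .inl j ∈ (CA.bas.repr x).support)
    (hα : .inr α ∈ (CA.bas.repr x).support) : False := by
  classical
  have hsub : (CA.bas.repr x).support ⊆ {.inl j, .inr α} := by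
    rintro (k | γ) hs
    · simp [weight_inl_injective (weight_eq_of_mem_support hI hx hmin hs hj)]
    · simp [weight_inr_injective ha (weight_eq_of_mem_support hI hx hmin hs hα)]
  have hx_eq : x = CA.bas.repr x (.inl j) • CA.t j + CA.bas.repr x (.inr α) • CA.e α := by
    rw [← CA.bas_t, ← CA.bas_e]
    exact (CA.bas.eq_sum_of_support_subset hsub).trans (sum_pair Sum.inl_ne_inr)
  obtain ⟨β, hβ, hβα, hβα1⟩ := exists_isStar_ne_add_ne_one hcover hC α.2
  have hz : CA.mul (CA.e β) x =
      (CA.bas.repr x (.inl j) * (if β j = 1 then a j β else 0)) • CA.bas (.inr ⟨β, hβ⟩) +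
      (CA.bas.repr x (.inr α) * b β α) • CA.bas (.inr ⟨β + α, hβ.add α.2 hβα hβα1⟩) := by
    rw [CA.bas_e, CA.bas_e]
    conv_lhs => rw [hx_eq]
    rw [map_add, map_smul, map_smul, CA.mul_comm (CA.e β) (CA.t j), CA.t_mul_e j β hβ,
      CA.e_mul_e β α hβ α.2 hβα hβα1]
    split_ifs <;> simp [smul_smul]
  have h2 : ∀ y ∈ I, y ≠ 0 → 2 ≤ #(CA.bas.repr y).support := fun y hy hy0 =>
    ((card_pair Sum.inl_ne_inr).symm.trans_le
      (card_le_card (insert_subset hj (singleton_subset_iff.mpr hα)))).trans (hmin y hy hy0)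
  have hw := funext fun i => CA.bas.apply_eq_of_smul_add_smul_mem (fun y hy => hI _ y hy)
    (CA.t_mul_basis i) h2 (by simpa using α.2.2.1)
    (mul_ne_zero (Finsupp.mem_support_iff.mp hα) (hb β α hβ α.2 hβα hβα1)) (hz ▸ hI _ _ hx)
  exact α.2.2.1 (by simpa using congrArg Subtype.val (weight_inr_injective ha hw))

theorem exists_basis_mem (ha : ∀ i α, IsStar C α → α i = 1 → a i α ≠ 0)
    (hb : ∀ α β, IsStar C α → IsStar C β → α ≠ β → α + β ≠ 1 → b α β ≠ 0)
    (hcover : ∀ i, ∃ α, IsStar C α ∧ α i = 1)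
    (hC : ¬ ∃ α : Word n, (C : Set (Word n)) = {0, 1, α, 1 + α})
    (hI : ∀ x, ∀ y ∈ I, CA.mul x y ∈ I) (hI0 : I ≠ ⊥) : ∃ s, CA.bas s ∈ I := by
  obtain ⟨x, hx, hx0, hmin⟩ := CA.bas.exists_ne_zero_card_support_le hI0
  obtain ⟨s, hs⟩ := Finsupp.support_nonempty_iff.mpr (CA.bas.repr.map_ne_zero_iff.mpr hx0)
  have hsub : (CA.bas.repr x).support ⊆ {s} := by
    intro s' hs'
    have hw := weight_eq_of_mem_support hI hx hmin hs' hs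
    rcases s' with j' | α' <;> rcases s with j | α
    · simp [weight_inl_injective hw]
    · exact (false_of_inl_mem_support_of_inr_mem_support ha hb hcover hC hI hx hmin hs' hs).elim
    · exact (false_of_inl_mem_support_of_inr_mem_support ha hb hcover hC hI hx hmin hs hs').elim
    · simp [weight_inr_injective ha hw]
  refine ⟨s, ?_⟩
  rwa [CA.bas.eq_sum_of_support_subset hsub, sum_singleton,
    Submodule.smul_mem_iff _ (Finsupp.mem_support_iff.mp hs)] at hx

end CodeAlgebra

/-- Theorem 3.8: a non-degenerate code algebra is simple unless C = {0, 1, α, α^c}. -/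
theorem code_algebra_simple {F : Type*} [Field F] {n : ℕ}
    {C : Submodule (ZMod 2) (Word n)}
    {a : Fin n → Word n → F} {b : Word n → Word n → F} {c : Fin n → Word n → F}
    {A : Type*} [AddCommGroup A] [Module F A]
    (CA : CodeAlgebra F C a b c A)
    (hnd : Nondeg C a b c)
    (hC : ¬ ∃ α : Word n, (C : Set (Word n)) = {0, 1, α, 1 + α}) :
    ∀ I : Submodule F A, (∀ x : A, ∀ y ∈ I, CA.mul x y ∈ I) → I = ⊥ ∨ I = ⊤ := by
  obtain ⟨hsupp, hstar, ha, hb, hc⟩ := hnd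
  have hcover := exists_isStar_apply_eq_one hsupp hstar
  intro I hI
  refine or_iff_not_imp_left.mpr fun hI0 => ?_
  obtain ⟨s, hs⟩ := CodeAlgebra.exists_basis_mem ha hb hcover hC hI hI0
  obtain ⟨j, hj⟩ := CodeAlgebra.exists_t_mem_of_basis_mem hc hI hs
  exact CodeAlgebra.eq_top_of_t_mem ha hc hcover hC hI hj
end

section
/- Suppose char(𝔽) ≠ 2 and let A = A_C(Λ) be a non-degenerate code algebra with Aut(C)-regular structure parameters such that a_{i,α} ≠ 1 for all i ∈ supp(α), α ∈ C*. For each i, let τ_i be the algebra automorphism of A defined by τ_i(t_j) = t_j for all j and τ_i(e^α) = (−1)^{α_i} e^α for all α ∈ C* (the Miyamoto involution), and let M = ⟨τ₁, …, τₙ⟩ ≤ Aut(A). Then, identifying Aut(C) with its induced subgroup of Aut(A), the group G generated by M and Aut(C) satisfies: M ∩ Aut(C) = 1, τ_i g = g τ_{ig} for all g ∈ Aut(C) and all i, M is a normal subgroup of G, and G = M ⋊ Aut(C). -/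
def wperm {n : ℕ} (g : Equiv.Perm (Fin n)) (α : Word n) : Word n :=
  fun j => α (g.symm j)

def codeAut {n : ℕ} (C : Submodule (ZMod 2) (Word n)) : Subgroup (Equiv.Perm (Fin n)) where
  carrier := {g | ∀ α : Word n, α ∈ C ↔ wperm g α ∈ C}
  one_mem' := by intro α; rfl
  mul_mem' := by
    intro g h hg hh α
    have h1 : wperm (g * h) α = wperm g (wperm h α) := by
      funext j
      show α ((g * h)⁻¹ j) = α (h⁻¹ (g⁻¹ j))
      rw [mul_inv_rev, Equiv.Perm.mul_apply]
    simp only [Set.mem_setOf_eq] at *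
    rw [h1]
    exact (hh α).trans (hg (wperm h α))
  inv_mem' := by
    intro g hg α
    simp only [Set.mem_setOf_eq] at *
    have h1 : wperm g (wperm g⁻¹ α) = α := by
      funext j
      show α ((g⁻¹).symm (g.symm j)) = α j
      rw [Equiv.Perm.inv_def, Equiv.symm_symm, Equiv.apply_symm_apply]
    have h2 := hg (wperm g⁻¹ α)
    rw [h1] at h2
    exact h2.symm

theorem wperm_apply_apply {n : ℕ} (g : Equiv.Perm (Fin n)) (α : Word n) (i : Fin n) :
    wperm g α (g i) = α i := by
  simp [wperm]

theorem wperm_injective {n : ℕ} (g : Equiv.Perm (Fin n)) : Function.Injective (wperm g) :=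
  fun α β h => funext fun j => by simpa only [wperm_apply_apply] using congrFun h (g j)

theorem IsStar.wperm {n : ℕ} {C : Submodule (ZMod 2) (Word n)} {g : Equiv.Perm (Fin n)}
    (hg : g ∈ codeAut C) {α : Word n} (hα : IsStar C α) : IsStar C (wperm g α) :=
  ⟨(hg α).1 hα.1, fun h => hα.2.1 (wperm_injective g h),
    fun h => hα.2.2 (wperm_injective g h)⟩

namespace CodeAlgebra

variable {F : Type*} [Field F] {n : ℕ} {C : Submodule (ZMod 2) (Word n)}
  {a : Fin n → Word n → F} {b : Word n → Word n → F} {c : Fin n → Word n → F}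
  {A : Type*} [AddCommGroup A] [Module F A] (CA : CodeAlgebra F C a b c A)

theorem t_injective : Function.Injective CA.t :=
  fun i j h => Sum.inl_injective <| CA.bas.injective <| by rw [CA.bas_t, CA.bas_t, h]

theorem linearEquiv_ext {f f' : A ≃ₗ[F] A} (ht : ∀ i, f (CA.t i) = f' (CA.t i))
    (he : ∀ α, IsStar C α → f (CA.e α) = f' (CA.e α)) : f = f' := by
  refine LinearEquiv.toLinearMap_injective <| CA.bas.ext ?_
  rintro (i | ⟨α, hα⟩)
  · simpa only [CA.bas_t, LinearEquiv.coe_coe] using ht i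
  · simpa only [CA.bas_e, LinearEquiv.coe_coe] using he α hα

theorem codeAut_mul_miyamoto {τ : Fin n → (A ≃ₗ[F] A)} (hτt : ∀ i j, τ i (CA.t j) = CA.t j)
    (hτe : ∀ i α, IsStar C α → τ i (CA.e α) = (if α i = 1 then (-1 : F) else 1) • CA.e α)
    {ψ : codeAut C →* (A ≃ₗ[F] A)} (hψt : ∀ (g : codeAut C) i, ψ g (CA.t i) = CA.t (g.1 i))
    (hψe : ∀ (g : codeAut C) α, IsStar C α → ψ g (CA.e α) = CA.e (wperm g.1 α))
    (g : codeAut C) (i : Fin n) : ψ g * τ i = τ (g.1 i) * ψ g := by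
  refine CA.linearEquiv_ext (fun j => ?_) (fun α hα => ?_)
  · simp only [LinearEquiv.mul_apply, hτt, hψt]
  · simp only [LinearEquiv.mul_apply, hτe i α hα, map_smul, hψe g α hα,
      hτe (g.1 i) _ (hα.wperm g.2), wperm_apply_apply]

theorem eq_one_of_forall_map_t_eq {ψ : codeAut C →* (A ≃ₗ[F] A)}
    (hψt : ∀ (g : codeAut C) i, ψ g (CA.t i) = CA.t (g.1 i)) {g : codeAut C}
    (hg : ∀ i, ψ g (CA.t i) = CA.t i) : g = 1 :=
  Subtype.ext <| Equiv.ext fun i => CA.t_injective <| (hψt g i).symm.trans (hg i)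

end CodeAlgebra

theorem miyamoto_semidirect_general {F : Type*} [Field F] {n : ℕ}
    {C : Submodule (ZMod 2) (Word n)}
    {a : Fin n → Word n → F} {b : Word n → Word n → F} {c : Fin n → Word n → F}
    {A : Type*} [AddCommGroup A] [Module F A]
    (CA : CodeAlgebra F C a b c A)
    -- the Miyamoto involutions τ_i
    (τ : Fin n → (A ≃ₗ[F] A))
    (hτt : ∀ i j, τ i (CA.t j) = CA.t j)
    (hτe : ∀ i α, IsStar C α →
      τ i (CA.e α) = (if α i = 1 then (-1 : F) else 1) • CA.e α)
    -- the induced action of Aut(C)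
    (ψ : codeAut C →* (A ≃ₗ[F] A))
    (hψt : ∀ (g : codeAut C) (i : Fin n), ψ g (CA.t i) = CA.t (g.1 i))
    (hψe : ∀ (g : codeAut C) (α : Word n), IsStar C α → ψ g (CA.e α) = CA.e (wperm g.1 α)) :
    -- M ∩ Aut(C) = 1
    Subgroup.closure (Set.range τ) ⊓ ψ.range = ⊥ ∧
    -- τ_i g = g τ_{ig} (in the automorphism group of A)
    (∀ (g : codeAut C) (i : Fin n), ψ g * τ i = τ (g.1 i) * ψ g) ∧
    -- M is normal in G = M Aut(C), so G = M ⋊ Aut(C)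
    (∀ x ∈ Subgroup.closure (Set.range τ) ⊔ ψ.range,
      ∀ m ∈ Subgroup.closure (Set.range τ), x * m * x⁻¹ ∈ Subgroup.closure (Set.range τ)) := by
  set M := Subgroup.closure (Set.range τ)
  have hcomm := CA.codeAut_mul_miyamoto hτt hτe hψt hψe
  have hM_fix : M ≤ fixingSubgroup (A ≃ₗ[F] A) (Set.range CA.t) := by
    refine (Subgroup.closure_le _).2 ?_
    rintro _ ⟨i, rfl⟩
    exact (mem_fixingSubgroup_iff _).2 fun _ ⟨j, hj⟩ => hj ▸ hτt i j
  have hnorm : M ⊔ ψ.range ≤ Subgroup.normalizer (M : Set (A ≃ₗ[F] A)) := by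
    refine sup_le Subgroup.le_normalizer <| Subgroup.le_normalizer_closure_iff.2 ?_
    rintro _ ⟨g, rfl⟩ _ ⟨i, rfl⟩
    rw [hcomm, mul_inv_cancel_right]
    exact Subgroup.subset_closure ⟨g.1 i, rfl⟩
  refine ⟨eq_bot_iff.2 fun x hx => ?_, hcomm,
    fun x hx m hm => (Subgroup.mem_normalizer_iff.1 (hnorm hx) m).1 hm⟩
  obtain ⟨hxM, g, rfl⟩ := Subgroup.mem_inf.1 hx
  have hg : g = 1 := CA.eq_one_of_forall_map_t_eq hψt fun i =>
    (mem_fixingSubgroup_iff _).1 (hM_fix hxM) _ ⟨i, rfl⟩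
  rw [hg, map_one]
  exact one_mem _

/-- Theorem 3.13: the group generated by the Miyamoto involutions and Aut(C) is the
semidirect product of the Miyamoto group M by Aut(C). -/
theorem miyamoto_semidirect {F : Type*} [Field F] {n : ℕ}
    {C : Submodule (ZMod 2) (Word n)}
    {a : Fin n → Word n → F} {b : Word n → Word n → F} {c : Fin n → Word n → F}
    {A : Type*} [AddCommGroup A] [Module F A]
    (CA : CodeAlgebra F C a b c A)
    (hchar : (2 : F) ≠ 0)
    (hnd : Nondeg C a b c)
    (hreg : ∀ g ∈ codeAut C,
      (∀ i α, IsStar C α → α i = 1 → a i α = a (g i) (wperm g α)) ∧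
      (∀ α β, IsStar C α → IsStar C β → α ≠ β → α + β ≠ 1 →
        b α β = b (wperm g α) (wperm g β)) ∧
      (∀ i α, IsStar C α → α i = 1 → c i α = c (g i) (wperm g α)))
    (ha1 : ∀ i α, IsStar C α → α i = 1 → a i α ≠ 1)
    -- the Miyamoto involutions τ_i
    (τ : Fin n → (A ≃ₗ[F] A))
    (hτt : ∀ i j, τ i (CA.t j) = CA.t j)
    (hτe : ∀ i α, IsStar C α →
      τ i (CA.e α) = (if α i = 1 then (-1 : F) else 1) • CA.e α)
    -- the induced action of Aut(C)
    (ψ : codeAut C →* (A ≃ₗ[F] A))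
    (hψt : ∀ (g : codeAut C) (i : Fin n), ψ g (CA.t i) = CA.t (g.1 i))
    (hψe : ∀ (g : codeAut C) (α : Word n), IsStar C α → ψ g (CA.e α) = CA.e (wperm g.1 α)) :
    -- M ∩ Aut(C) = 1
    Subgroup.closure (Set.range τ) ⊓ ψ.range = ⊥ ∧
    -- τ_i g = g τ_{ig} (in the automorphism group of A)
    (∀ (g : codeAut C) (i : Fin n), ψ g * τ i = τ (g.1 i) * ψ g) ∧
    -- M is normal in G = M Aut(C), so G = M ⋊ Aut(C)
    (∀ x ∈ Subgroup.closure (Set.range τ) ⊔ ψ.range,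
      ∀ m ∈ Subgroup.closure (Set.range τ), x * m * x⁻¹ ∈ Subgroup.closure (Set.range τ)) :=
  miyamoto_semidirect_general CA τ hτt hτe ψ hψt hψe
end

section
/- Let A = A_C(Λ) be a code algebra, D a constant weight subcode of C such that the structure parameters supported on D* are constant: a_{i,α} = a, c_{i,α} = c for all i ∈ supp(α), α ∈ D*, and b_{α,β} = b for all distinct α, β ∈ D* with β ≠ α^c. Let d be the common weight of codewords in D*, m := |supp(D)|, e := 2|D*| − |D|, and fix v ∈ 𝔽₂ⁿ and λ, μ ∈ 𝔽 with μ ≠ 0. Then s(D,v) := λ·Σ_{i ∈ supp(D)} t_i + μ·Σ_{α ∈ D*} (−1)^{(v,α)} e^α is an idempotent of A if and only if λ = (1 − b·e·μ)/(2·a·d) and (b²e² + 4a²c·|D*|·d³/m)·μ² + 2be(ad − 1)·μ + 1 − 2ad = 0. -/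
open scoped Classical

/-!
Put `u = ∑_{i ∈ supp D} t_i` and `w = ∑_{α ∈ D*} (-1)^{(v,α)} e^α`, so `s = λ u + μ w`. Then
`u² = u`, `u w = a d w` and `w² = c N u + b e w`. Here `N` is the number of `α ∈ D*` with
`α_i = 1`; it does not depend on `i ∈ supp D`, because exactly half of `D` has `α_i = 1`, so
double counting gives `m N = |D*| d`. For `γ ∈ D*`, `e = 2|D*| - |D|` is the number of
`α ∈ D*` with `α + γ ∈ D*`, and the signs multiply correctly because `α ↦ (-1)^{(v,α)}` is a
character. As `u` and `w` are linearly independent, `s² = s` says `λ² + c N μ² = λ` and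
`2adλμ + b e μ² = μ`, and solving the second for `λ` turns the first into the quadratic in `μ`.
-/

namespace Word

variable {n : ℕ}

lemma add_add_cancel_left (α β : Word n) : α + (α + β) = β := by
  rw [← add_assoc, ZModModule.add_self, zero_add]

lemma add_eq_zero_iff {α β : Word n} : α + β = 0 ↔ α = β := by
  rw [add_eq_zero_iff_eq_neg, ZModModule.neg_eq_self]

lemma dotW_add_right (v α β : Word n) : dotW v (α + β) = dotW v α + dotW v β := by
  simp only [dotW, Pi.add_apply, mul_add, Finset.sum_add_distrib]

/-- The character `α ↦ (-1) ^ (v, α)`. -/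
def sign (R : Type*) [Ring R] (v α : Word n) : R := if dotW v α = 1 then -1 else 1

variable {R : Type*} [Ring R] (v : Word n)

lemma sign_add (α β : Word n) : sign R v (α + β) = sign R v α * sign R v β := by
  unfold sign
  rw [dotW_add_right]
  have h01 : ∀ x : ZMod 2, x = 0 ∨ x = 1 := by decide
  rcases h01 (dotW v α) with h | h <;> rcases h01 (dotW v β) with h' | h' <;>
    simp [h, h']

lemma sign_mul_self (α : Word n) : sign R v α * sign R v α = 1 := by
  unfold sign
  split_ifs <;> simp

lemma filter_apply_eq_one_eq_wsupp {T : Finset (Fin n)} {α : Word n} (h : wsupp α ⊆ T) :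
    T.filter (α · = 1) = wsupp α := by
  ext i
  simp only [Finset.mem_filter, wsupp, Finset.mem_univ, true_and]
  exact ⟨And.right, fun hi => ⟨h (Finset.mem_filter.2 ⟨Finset.mem_univ i, hi⟩), hi⟩⟩

variable {M : Type*} [AddCommMonoid M]

lemma sum_sum_wsupp {S : Finset (Word n)} {T : Finset (Fin n)} (hST : ∀ α ∈ S, wsupp α ⊆ T)
    (f : Fin n → M) :
    ∑ α ∈ S, ∑ i ∈ wsupp α, f i = ∑ i ∈ T, (S.filter (· i = 1)).card • f i := by
  rw [Finset.sum_comm' (t' := T) (s' := fun i => S.filter (· i = 1))]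
  · simp only [Finset.sum_const]
  · intro α i
    simp only [Finset.mem_filter, wsupp, Finset.mem_univ, true_and]
    exact ⟨fun h => ⟨h, hST α h.1 (Finset.mem_filter.2 ⟨Finset.mem_univ i, h.2⟩)⟩, And.left⟩

/-- `β ↦ α + β` permutes `{β ∈ S | α + β ∈ S}`. -/
lemma sum_sum_filter_add_mem (S : Finset (Word n)) (G : Word n → M) :
    ∑ α ∈ S, ∑ β ∈ S with α + β ∈ S, G (α + β)
      = ∑ γ ∈ S, (S.filter (· + γ ∈ S)).card • G γ := by
  calc ∑ α ∈ S, ∑ β ∈ S with α + β ∈ S, G (α + β)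
      = ∑ α ∈ S, ∑ γ ∈ S with α + γ ∈ S, G γ := by
        refine Finset.sum_congr rfl fun α _ => Finset.sum_equiv (Equiv.addLeft α) ?_ fun _ _ => rfl
        intro β
        simp only [Finset.mem_filter, Equiv.coe_addLeft, add_add_cancel_left]
        tauto
    _ = ∑ γ ∈ S, (S.filter (· + γ ∈ S)).card • G γ := by
        rw [Finset.sum_comm' (t' := S) (s' := fun γ => S.filter (· + γ ∈ S))]
        · simp only [Finset.sum_const]
        · intro α γ
          simp only [Finset.mem_filter, add_comm α γ]
          tauto

end Word

namespace BinaryCode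

variable {n : ℕ} (D : Submodule (ZMod 2) (Word n))

noncomputable def words : Finset (Word n) := Finset.univ.filter (· ∈ D)

noncomputable def stars : Finset (Word n) := Finset.univ.filter (IsStar D)

noncomputable def supp : Finset (Fin n) := Finset.univ.filter fun i => ∃ α ∈ D, α i = 1

variable {D}

lemma mem_words {α : Word n} : α ∈ words D ↔ α ∈ D := by simp [words]

lemma mem_stars {α : Word n} : α ∈ stars D ↔ IsStar D α := by simp [stars]

lemma mem_supp {i : Fin n} : i ∈ supp D ↔ ∃ α ∈ D, α i = 1 := by simp [supp]

lemma natCard_eq_card_words : Nat.card D = (words D).card := by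
  rw [Nat.card_eq_fintype_card, Fintype.card_subtype]; rfl

lemma natCard_stars_eq_card_stars : Nat.card {α // IsStar D α} = (stars D).card := by
  rw [Nat.card_eq_fintype_card, Fintype.card_subtype]; rfl

lemma wsupp_subset_supp {α : Word n} (hα : α ∈ D) : wsupp α ⊆ supp D := fun _ hi =>
  mem_supp.2 ⟨α, hα, (Finset.mem_filter.1 hi).2⟩

/-- Translation by a codeword `β` with `β i = 1` swaps the codewords with `α i = 1` and
those with `α i = 0`. -/
lemma two_mul_card_filter_apply_eq_one {i : Fin n} (hi : i ∈ supp D) :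
    2 * ((words D).filter (· i = 1)).card = (words D).card := by
  obtain ⟨β, hβ, hβi⟩ := mem_supp.1 hi
  have hswap : ((words D).filter (· i = 1)).card = ((words D).filter (¬ · i = 1)).card := by
    refine Finset.card_nbij' (· + β) (· + β) ?_ ?_ ?_ ?_ <;>
      simp only [Finset.coe_filter, Set.MapsTo, Set.LeftInvOn, Set.mem_ofPred_eq, mem_words,
        Pi.add_apply, hβi, add_assoc, ZModModule.add_self, add_zero]
    · exact fun γ ⟨hγ, hγi⟩ => ⟨D.add_mem hγ hβ, by rw [hγi]; decide⟩
    · have h01 : ∀ x : ZMod 2, x ≠ 1 → x + 1 = 1 := by decide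
      exact fun γ ⟨hγ, hγi⟩ => ⟨D.add_mem hγ hβ, h01 _ hγi⟩
    all_goals exact fun _ _ => trivial
  rw [two_mul]
  nth_rw 2 [hswap]
  exact Finset.card_filter_add_card_filter_not _

lemma stars_filter_apply_eq_one (i : Fin n) :
    (stars D).filter (· i = 1) = ((words D).filter (· i = 1)).erase 1 := by
  ext α
  simp only [Finset.mem_filter, Finset.mem_erase, mem_stars, mem_words, IsStar]
  constructor
  · rintro ⟨⟨hα, -, h1⟩, hi⟩
    exact ⟨h1, hα, hi⟩
  · rintro ⟨h1, hα, hi⟩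
    refine ⟨⟨hα, ?_, h1⟩, hi⟩
    rintro rfl
    simp at hi

lemma card_stars_filter_apply_eq_one_congr {i j : Fin n} (hi : i ∈ supp D) (hj : j ∈ supp D) :
    ((stars D).filter (· i = 1)).card = ((stars D).filter (· j = 1)).card := by
  have hij := (two_mul_card_filter_apply_eq_one hi).trans
    (two_mul_card_filter_apply_eq_one hj).symm
  simp only [stars_filter_apply_eq_one, Finset.card_erase_eq_ite, Finset.mem_filter, mem_words,
    Pi.one_apply]
  split_ifs <;> omega

lemma card_supp_mul_card_stars_filter {d : ℕ} (hd : ∀ α, IsStar D α → (wsupp α).card = d)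
    {i : Fin n} (hi : i ∈ supp D) :
    (supp D).card * ((stars D).filter (· i = 1)).card = (stars D).card * d := by
  calc (supp D).card * ((stars D).filter (· i = 1)).card
      = ∑ j ∈ supp D, ((stars D).filter (· j = 1)).card := by
        rw [Finset.sum_congr rfl fun j hj => card_stars_filter_apply_eq_one_congr hj hi,
          Finset.sum_const, smul_eq_mul]
    _ = ∑ α ∈ stars D, ((supp D).filter (α · = 1)).card := by
        simp only [Finset.card_filter]
        exact Finset.sum_comm
    _ = (stars D).card * d := by
        rw [Finset.sum_congr rfl fun α hα => by
          rw [Word.filter_apply_eq_one_eq_wsupp (wsupp_subset_supp (mem_stars.1 hα).1),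
            hd α (mem_stars.1 hα)]]
        rw [Finset.sum_const, smul_eq_mul]

lemma stars_eq_sdiff : stars D = words D \ {0, 1} := by
  ext α
  simp only [mem_stars, IsStar, Finset.mem_sdiff, mem_words, Finset.mem_insert,
    Finset.mem_singleton, not_or]

/-- For `γ ∈ D*`, `α ↦ α + γ` maps `D ∩ {0, 1}` onto the `α ∈ D*` with `α + γ ∉ D*`. -/
lemma card_stars_filter_add_mem_add_card_words {γ : Word n} (hγ : IsStar D γ) :
    ((stars D).filter (· + γ ∈ stars D)).card + (words D).card = 2 * (stars D).card := by
  have hD : (stars D).card + (words D ∩ {0, 1}).card = (words D).card := by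
    rw [stars_eq_sdiff]
    exact Finset.card_sdiff_add_card_inter _ _
  have hγ' : (stars D).card
      = ((stars D).filter (· + γ ∈ stars D)).card + (words D ∩ {0, 1}).card := by
    rw [← Finset.card_filter_add_card_filter_not (s := stars D) (· + γ ∈ stars D)]
    congr 1
    refine Finset.card_nbij' (· + γ) (· + γ) ?_ ?_ ?_ ?_
    all_goals
      intro α hα
      simp only [Finset.coe_filter, Finset.coe_inter, Set.mem_ofPred_eq, Set.mem_inter_iff,
        Finset.mem_coe, mem_stars, mem_words, IsStar, Finset.mem_insert, Finset.mem_singleton,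
        add_assoc, ZModModule.add_self, add_zero] at hα ⊢
    · have := D.add_mem hα.1.1 hγ.1
      tauto
    · obtain ⟨hαD, rfl | rfl⟩ := hα
      · rw [zero_add]
        exact ⟨hγ, fun h => h.2.1 rfl⟩
      · refine ⟨⟨D.add_mem hαD hγ.1, ?_, ?_⟩, fun h => h.2.2 rfl⟩
        · rw [Ne, Word.add_eq_zero_iff]
          exact Ne.symm hγ.2.2
        · rw [Ne, add_eq_left]
          exact hγ.2.1
  omega

lemma cast_card_stars_filter_apply_eq_one {F : Type*} [Field F] {d m : ℕ}
    (hd : ∀ α, IsStar D α → (wsupp α).card = d) (hm : m = (supp D).card) (hmF : (m : F) ≠ 0)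
    {i : Fin n} (hi : i ∈ supp D) :
    (((stars D).filter (· i = 1)).card : F) = Nat.card {α // IsStar D α} * d / m := by
  have hcount := congrArg (Nat.cast : ℕ → F) (card_supp_mul_card_stars_filter hd hi)
  push_cast at hcount
  rw [eq_div_iff hmF, hm, natCard_stars_eq_card_stars]
  linear_combination hcount

lemma cast_card_stars_filter_add_mem {R : Type*} [Ring R] {γ : Word n} (hγ : IsStar D γ) :
    (((stars D).filter (· + γ ∈ stars D)).card : R)
      = 2 * Nat.card {α // IsStar D α} - Nat.card D := by
  have hcount := congrArg (Nat.cast : ℕ → R) (card_stars_filter_add_mem_add_card_words hγ)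
  push_cast at hcount
  rw [natCard_stars_eq_card_stars, natCard_eq_card_words, eq_sub_iff_add_eq, hcount]

end BinaryCode

lemma LinearIndependent.pair_of_linearMap {K M : Type*} [Field K] [AddCommGroup M] [Module K M]
    {x y : M} (φ ψ : M →ₗ[K] K) (hφx : φ x ≠ 0) (hφy : φ y = 0) (hψy : ψ y ≠ 0) :
    LinearIndependent K ![x, y] := by
  rw [LinearIndependent.pair_iff]
  intro s t hst
  obtain rfl : s = 0 := by simpa [hφx, hφy] using congrArg φ hst
  refine ⟨rfl, ?_⟩
  simpa [hψy] using congrArg ψ hst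

/-- The two conditions for `s(D,v)` to be idempotent, solved for `λ`; here `A = 2ad`,
`B = b e` and `Q = c |D*| d / m`. -/
lemma idempotent_coeff_iff {K : Type*} [Field K] {A B Q lam mu : K} (hA : A ≠ 0)
    (hmu : mu ≠ 0) :
    (lam ^ 2 + Q * mu ^ 2 = lam ∧ A * lam * mu + B * mu ^ 2 = mu) ↔
      (lam = (1 - B * mu) / A ∧
        (B ^ 2 + A ^ 2 * Q) * mu ^ 2 + B * (A - 2) * mu + 1 - A = 0) := by
  have hlin_iff : A * lam * mu + B * mu ^ 2 = mu ↔ A * lam = 1 - B * mu := by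
    rw [← sub_eq_zero, show A * lam * mu + B * mu ^ 2 - mu = (A * lam - (1 - B * mu)) * mu by ring,
      mul_eq_zero, or_iff_left hmu, sub_eq_zero]
  rw [hlin_iff, eq_div_iff hA, mul_comm lam A, and_comm]
  refine and_congr_right fun hlin => ?_
  have hquad : (B ^ 2 + A ^ 2 * Q) * mu ^ 2 + B * (A - 2) * mu + 1 - A
      = A ^ 2 * (lam ^ 2 + Q * mu ^ 2 - lam) := by
    linear_combination (-(A * lam + 1 - B * mu - A)) * hlin
  rw [hquad, mul_eq_zero, or_iff_right (pow_ne_zero 2 hA), sub_eq_zero]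

namespace CodeAlgebra

open BinaryCode

variable {F : Type*} [Field F] {n : ℕ} {C : Submodule (ZMod 2) (Word n)}
  {a : Fin n → Word n → F} {b : Word n → Word n → F} {c : Fin n → Word n → F}
  {A : Type*} [AddCommGroup A] [Module F A] (CA : CodeAlgebra F C a b c A)

lemma repr_t (i : Fin n) : CA.bas.repr (CA.t i) = Finsupp.single (Sum.inl i) 1 := by
  rw [← CA.bas_t, CA.bas.repr_self]

lemma repr_e {α : Word n} (hα : IsStar C α) :
    CA.bas.repr (CA.e α) = Finsupp.single (Sum.inr ⟨α, hα⟩) 1 := by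
  rw [← CA.bas_e ⟨α, hα⟩, CA.bas.repr_self]

lemma linearIndependent_sum_t_sum_smul_e {T : Finset (Fin n)} (hT : T.Nonempty)
    {S : Finset (Word n)} (hS : ∀ α ∈ S, IsStar C α) {f : Word n → F} {α₀ : Word n}
    (hα₀ : α₀ ∈ S) (hf : f α₀ ≠ 0) :
    LinearIndependent F ![∑ i ∈ T, CA.t i, ∑ α ∈ S, f α • CA.e α] := by
  obtain ⟨i₀, hi₀⟩ := hT
  refine .pair_of_linearMap (CA.bas.coord (Sum.inl i₀))
    (CA.bas.coord (Sum.inr ⟨α₀, hS α₀ hα₀⟩)) ?_ ?_ ?_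
  · simp [repr_t, Finsupp.single_apply, hi₀]
  · simp +contextual [repr_e, hS]
  · rw [map_sum, Finset.sum_eq_single α₀]
    · simpa [repr_e _ (hS α₀ hα₀)] using hf
    · intro β hβ hne
      simp [repr_e _ (hS β hβ), hne]
    · exact fun h => absurd hα₀ h

lemma mul_sum_t_self (T : Finset (Fin n)) :
    CA.mul (∑ i ∈ T, CA.t i) (∑ i ∈ T, CA.t i) = ∑ i ∈ T, CA.t i := by
  simp only [map_sum, LinearMap.sum_apply, CA.t_mul_t]
  exact Finset.sum_congr rfl fun i hi => by rw [Finset.sum_ite_eq' T i, if_pos hi]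

lemma sum_t_mul_e {T : Finset (Fin n)} {α : Word n} (hα : IsStar C α) (hαT : wsupp α ⊆ T)
    {a0 : F} (ha : ∀ i, α i = 1 → a i α = a0) :
    CA.mul (∑ i ∈ T, CA.t i) (CA.e α) = (a0 * (wsupp α).card) • CA.e α := by
  simp only [map_sum, LinearMap.sum_apply, CA.t_mul_e _ _ hα]
  rw [← Finset.sum_filter, Word.filter_apply_eq_one_eq_wsupp hαT,
    Finset.sum_congr rfl fun i hi => by rw [ha i (Finset.mem_filter.1 hi).2],
    Finset.sum_const, ← Nat.cast_smul_eq_nsmul F, smul_smul, _root_.mul_comm]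

lemma e_mul_e_of_isStar {D : Submodule (ZMod 2) (Word n)} (hDC : D ≤ C) {b0 c0 : F}
    (hb : ∀ α β, IsStar D α → IsStar D β → α ≠ β → α + β ≠ 1 → b α β = b0)
    (hc : ∀ i α, IsStar D α → α i = 1 → c i α = c0)
    {α β : Word n} (hα : IsStar D α) (hβ : IsStar D β) :
    CA.mul (CA.e α) (CA.e β)
      = (if α = β then c0 • ∑ i ∈ wsupp α, CA.t i else 0)
        + (if α + β ∈ stars D then b0 • CA.e (α + β) else 0) := by
  have hαC : IsStar C α := ⟨hDC hα.1, hα.2⟩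
  have hβC : IsStar C β := ⟨hDC hβ.1, hβ.2⟩
  by_cases hαβ : α = β
  · subst hαβ
    rw [if_pos rfl, ZModModule.add_self, if_neg fun h => (mem_stars.1 h).2.1 rfl, add_zero,
      CA.e_mul_self α hαC, Finset.smul_sum]
    exact Finset.sum_congr rfl fun i hi => by rw [hc i α hα (Finset.mem_filter.1 hi).2]
  rw [if_neg hαβ, zero_add]
  by_cases h1 : α + β = 1
  · rw [CA.e_mul_compl α β hαC hβC h1, if_neg fun h => (mem_stars.1 h).2.2 h1]
  · have hstar : α + β ∈ stars D :=
      mem_stars.2 ⟨D.add_mem hα.1 hβ.1, fun h => hαβ (Word.add_eq_zero_iff.1 h), h1⟩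
    rw [if_pos hstar, CA.e_mul_e α β hαC hβC hαβ h1, hb α β hα hβ hαβ h1]

variable {D : Submodule (ZMod 2) (Word n)}

lemma sum_t_mul_sum_smul_e (hDC : D ≤ C) {d : ℕ} (hd : ∀ α, IsStar D α → (wsupp α).card = d)
    {a0 : F} (ha : ∀ i α, IsStar D α → α i = 1 → a i α = a0) (f : Word n → F) :
    CA.mul (∑ i ∈ supp D, CA.t i) (∑ α ∈ stars D, f α • CA.e α)
      = (a0 * d) • ∑ α ∈ stars D, f α • CA.e α := by
  rw [map_sum (CA.mul (∑ i ∈ supp D, CA.t i)), Finset.smul_sum]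
  refine Finset.sum_congr rfl fun α hα => ?_
  have hα := mem_stars.1 hα
  rw [map_smul, CA.sum_t_mul_e ⟨hDC hα.1, hα.2⟩ (wsupp_subset_supp hα.1) (ha · α hα), hd α hα,
    smul_comm]

lemma sign_smul_e_mul_sign_smul_e (hDC : D ≤ C) {b0 c0 : F}
    (hb : ∀ α β, IsStar D α → IsStar D β → α ≠ β → α + β ≠ 1 → b α β = b0)
    (hc : ∀ i α, IsStar D α → α i = 1 → c i α = c0) (v : Word n)
    {α β : Word n} (hα : IsStar D α) (hβ : IsStar D β) :
    CA.mul (Word.sign F v α • CA.e α) (Word.sign F v β • CA.e β)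
      = (if α = β then c0 • ∑ i ∈ wsupp α, CA.t i else 0)
        + (if α + β ∈ stars D then (b0 * Word.sign F v (α + β)) • CA.e (α + β) else 0) := by
  rw [map_smul, map_smul, LinearMap.smul_apply, smul_smul,
    CA.e_mul_e_of_isStar hDC hb hc hα hβ, smul_add]
  congr 1
  · split_ifs with h
    · subst h
      rw [Word.sign_mul_self, one_smul]
    · exact smul_zero _
  · split_ifs
    · rw [smul_smul, Word.sign_add, _root_.mul_comm (Word.sign F v β), _root_.mul_comm b0]
    · exact smul_zero _

lemma mul_self_sum_sign_smul_e (hDC : D ≤ C) {b0 c0 : F}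
    (hb : ∀ α β, IsStar D α → IsStar D β → α ≠ β → α + β ≠ 1 → b α β = b0)
    (hc : ∀ i α, IsStar D α → α i = 1 → c i α = c0) (v : Word n) {N eN : F}
    (hN : ∀ i ∈ supp D, (((stars D).filter (· i = 1)).card : F) = N)
    (he : ∀ γ ∈ stars D, (((stars D).filter (· + γ ∈ stars D)).card : F) = eN) :
    CA.mul (∑ α ∈ stars D, Word.sign F v α • CA.e α) (∑ α ∈ stars D, Word.sign F v α • CA.e α)
      = (c0 * N) • ∑ i ∈ supp D, CA.t i
        + (b0 * eN) • ∑ α ∈ stars D, Word.sign F v α • CA.e α := by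
  simp only [map_sum, LinearMap.sum_apply]
  rw [Finset.sum_comm, Finset.sum_congr rfl fun α hα => Finset.sum_congr rfl fun β hβ =>
    CA.sign_smul_e_mul_sign_smul_e hDC hb hc v (mem_stars.1 hα) (mem_stars.1 hβ)]
  simp only [Finset.sum_add_distrib, Finset.sum_ite_eq, ← Finset.sum_filter,
    Finset.filter_mem_eq_inter, Finset.inter_self]
  rw [← Finset.smul_sum, Word.sum_sum_wsupp fun α hα => wsupp_subset_supp (mem_stars.1 hα).1,
    Word.sum_sum_filter_add_mem (stars D) fun γ => (b0 * Word.sign F v γ) • CA.e γ]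
  congr 1
  · rw [Finset.smul_sum, Finset.smul_sum]
    refine Finset.sum_congr rfl fun i hi => ?_
    rw [← Nat.cast_smul_eq_nsmul F, hN i hi, smul_smul]
  · rw [Finset.smul_sum]
    refine Finset.sum_congr rfl fun γ hγ => ?_
    rw [← Nat.cast_smul_eq_nsmul F, he γ hγ]
    module

end CodeAlgebra

/-- Proposition 4.2: the s-map. For a constant weight subcode D with constant structure
parameters, s(D,v) is an idempotent if and only if λ and μ satisfy the given equations. -/
theorem s_map_idempotent_iff {F : Type*} [Field F] {n : ℕ}
    {C : Submodule (ZMod 2) (Word n)}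
    {a : Fin n → Word n → F} {b : Word n → Word n → F} {c : Fin n → Word n → F}
    {A : Type*} [AddCommGroup A] [Module F A]
    (CA : CodeAlgebra F C a b c A)
    (D : Submodule (ZMod 2) (Word n)) (hDC : D ≤ C)
    (hDne : ∃ α, IsStar D α)
    (d : ℕ) (hd : ∀ α, IsStar D α → (wsupp α).card = d)
    (a0 b0 c0 : F)
    (ha : ∀ i α, IsStar D α → α i = 1 → a i α = a0)
    (hb : ∀ α β, IsStar D α → IsStar D β → α ≠ β → α + β ≠ 1 → b α β = b0)
    (hc : ∀ i α, IsStar D α → α i = 1 → c i α = c0)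
    (v : Word n) (lam mu : F) (hmu : mu ≠ 0)
    (h2ad : (2 : F) * a0 * (d : F) ≠ 0)
    (m : ℕ) (hm : m = (Finset.univ.filter fun i : Fin n => ∃ α ∈ D, α i = 1).card)
    (hmF : (m : F) ≠ 0)
    (ds : ℕ) (hds : ds = Nat.card {α : Word n // IsStar D α})
    (eN : F) (heN : eN = 2 * (ds : F) - (Nat.card D : F))
    (s : A)
    (hs : s = lam • (∑ i ∈ Finset.univ.filter (fun i : Fin n => ∃ α ∈ D, α i = 1), CA.t i)
      + mu • (∑ α ∈ Finset.univ.filter (fun α : Word n => IsStar D α),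
          (if dotW v α = 1 then (-1 : F) else 1) • CA.e α)) :
    CA.mul s s = s ↔
      (lam = (1 - b0 * eN * mu) / (2 * a0 * (d : F)) ∧
        (b0 ^ 2 * eN ^ 2 + 4 * a0 ^ 2 * c0 * (ds : F) * (d : F) ^ 3 / (m : F)) * mu ^ 2
          + 2 * b0 * eN * (a0 * (d : F) - 1) * mu + 1 - 2 * a0 * (d : F) = 0) := by
  obtain ⟨α₀, hα₀⟩ := hDne
  subst hds heN
  have hsupp : (BinaryCode.supp D).Nonempty := by
    refine (Finset.card_pos.1 ?_).mono (BinaryCode.wsupp_subset_supp hα₀.1)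
    rw [hd α₀ hα₀, Nat.pos_iff_ne_zero]
    rintro rfl
    simp at h2ad
  set u := ∑ i ∈ BinaryCode.supp D, CA.t i
  set w := ∑ α ∈ BinaryCode.stars D, Word.sign F v α • CA.e α
  have hs' : s = lam • u + mu • w := hs
  have hss : CA.mul s s = (lam ^ 2 + c0 * (Nat.card {α // IsStar D α} * d / m) * mu ^ 2) • u
      + (2 * a0 * d * lam * mu
        + b0 * (2 * Nat.card {α // IsStar D α} - Nat.card D) * mu ^ 2) • w := by
    simp only [hs', map_add, map_smul, LinearMap.add_apply, LinearMap.smul_apply]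
    rw [CA.mul_comm w u, CA.mul_sum_t_self, CA.sum_t_mul_sum_smul_e hDC hd ha,
      CA.mul_self_sum_sign_smul_e hDC hb hc v
        (fun i hi => BinaryCode.cast_card_stars_filter_apply_eq_one hd hm hmF hi)
        (fun γ hγ => BinaryCode.cast_card_stars_filter_add_mem (BinaryCode.mem_stars.1 hγ))]
    module
  have hind : LinearIndependent F ![u, w] :=
    CA.linearIndependent_sum_t_sum_smul_e hsupp
      (fun α hα => ⟨hDC (BinaryCode.mem_stars.1 hα).1, (BinaryCode.mem_stars.1 hα).2⟩)
      (BinaryCode.mem_stars.2 hα₀) (left_ne_zero_of_mul_eq_one (Word.sign_mul_self v α₀))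
  have hcoeff (P Q : F) : P • u + Q • w = lam • u + mu • w ↔ P = lam ∧ Q = mu :=
    ⟨hind.eq_of_pair, by rintro ⟨rfl, rfl⟩; rfl⟩
  rw [hss, hs', hcoeff, idempotent_coeff_iff h2ad hmu]
  exact and_congr Iff.rfl ⟨fun h => by linear_combination h, fun h => by linear_combination h⟩
end
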